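/- Fix λ ≠ 0. A continuously differentiable covector field A : ℝ⁴ → ℝ⁴ satisfies the invariance conditions L_ξA = 0 for ξ = e₁, ξ = e₃, ξ = e₂ − e₄ = (0,1,0,−1) and ξ = e₁₂ − e₁₄ + λe₂ = (−x²−x⁴, x¹+λ, 0, −x¹) if and only if there exist constants C₁, C₂, C₃, C₄ ∈ ℝ such that, writing s = x² + x⁴, for all x: A₁(x) = (C₂/λ)·s + C₃, A₂(x) = (C₂/(2λ²))·s² + (C₃/λ)·s + C₄, A₃(x) = C₁ and A₄(x) = A₂(x) + C₂. (This is the class P₍₄,₉₎ for λ ≠ 0, parabolic helices with translations along an isotropic hyperplane.) -/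

import Mathlib

open Real

/-- Partial derivative of a scalar function on ℝ⁴ in the j-th coordinate direction. -/
noncomputable def pd (j : Fin 4) (f : (Fin 4 → ℝ) → ℝ) (x : Fin 4 → ℝ) : ℝ :=
  fderiv ℝ f x (Pi.single j 1)

/-- The i-th component of the Lie derivative of the covector field A along
the vector field ξ at the point x:  Σ_j ξ^j ∂_j A_i + Σ_j A_j ∂_i ξ^j. -/
noncomputable def lieCov (ξ A : (Fin 4 → ℝ) → Fin 4 → ℝ) (x : Fin 4 → ℝ) (i : Fin 4) : ℝ :=
  (∑ j : Fin 4, ξ x j * pd j (fun y => A y i) x)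
    + ∑ j : Fin 4, A x j * pd i (fun y => ξ y j) x

/-- Invariance condition L_ξ A = 0 on all of ℝ⁴. -/
def PInvariant (ξ A : (Fin 4 → ℝ) → Fin 4 → ℝ) : Prop :=
  ∀ x i, lieCov ξ A x i = 0

/-- Invariance condition L_ξ A = 0 on a set M. -/
def PInvariantOn (ξ A : (Fin 4 → ℝ) → Fin 4 → ℝ) (M : Set (Fin 4 → ℝ)) : Prop :=
  ∀ x ∈ M, ∀ i, lieCov ξ A x i = 0

def e1 : (Fin 4 → ℝ) → Fin 4 → ℝ := fun _ => ![1, 0, 0, 0]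
def e2 : (Fin 4 → ℝ) → Fin 4 → ℝ := fun _ => ![0, 1, 0, 0]
def e3 : (Fin 4 → ℝ) → Fin 4 → ℝ := fun _ => ![0, 0, 1, 0]
def e4 : (Fin 4 → ℝ) → Fin 4 → ℝ := fun _ => ![0, 0, 0, 1]
def e12 : (Fin 4 → ℝ) → Fin 4 → ℝ := fun x => ![-x 1, x 0, 0, 0]
def e13 : (Fin 4 → ℝ) → Fin 4 → ℝ := fun x => ![x 2, 0, -x 0, 0]
def e23 : (Fin 4 → ℝ) → Fin 4 → ℝ := fun x => ![0, -x 2, x 1, 0]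
def e14 : (Fin 4 → ℝ) → Fin 4 → ℝ := fun x => ![x 3, 0, 0, x 0]
def e24 : (Fin 4 → ℝ) → Fin 4 → ℝ := fun x => ![0, x 3, 0, x 1]
def e34 : (Fin 4 → ℝ) → Fin 4 → ℝ := fun x => ![0, 0, x 3, x 2]

lemma pd_eq {f : (Fin 4 → ℝ) → ℝ} {L : (Fin 4 → ℝ) →L[ℝ] ℝ} {x : Fin 4 → ℝ}
    (h : HasFDerivAt f L x) (j : Fin 4) : pd j f x = L (Pi.single j 1) := by
  rw [pd, h.fderiv]

lemma pd_const (c : ℝ) (j : Fin 4) (x : Fin 4 → ℝ) : pd j (fun _ => c) x = 0 := by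
  rw [pd_eq (hasFDerivAt_const c x) j]; simp

lemma hasFDerivAt_coord (i : Fin 4) (x : Fin 4 → ℝ) :
    HasFDerivAt (fun y : Fin 4 → ℝ => y i)
      (ContinuousLinearMap.proj i : (Fin 4 → ℝ) →L[ℝ] ℝ) x := by
  have h := (ContinuousLinearMap.proj i : (Fin 4 → ℝ) →L[ℝ] ℝ).hasFDerivAt (x := x)
  have e : ⇑(ContinuousLinearMap.proj i : (Fin 4 → ℝ) →L[ℝ] ℝ) = (fun y : Fin 4 → ℝ => y i) := rfl
  exact e ▸ h

lemma pd_m13 (j : Fin 4) (x : Fin 4 → ℝ) :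
    pd j (fun y : Fin 4 → ℝ => -y 1 - y 3) x
      = -(Pi.single j (1:ℝ) : Fin 4 → ℝ) 1 - (Pi.single j (1:ℝ) : Fin 4 → ℝ) 3 := by
  rw [pd_eq (f := fun y : Fin 4 → ℝ => -y 1 - y 3) (((hasFDerivAt_coord 1 x).neg.sub (hasFDerivAt_coord 3 x))) j]
  simp

lemma pd_p0 (l : ℝ) (j : Fin 4) (x : Fin 4 → ℝ) :
    pd j (fun y : Fin 4 → ℝ => y 0 + l) x = (Pi.single j (1:ℝ) : Fin 4 → ℝ) 0 := by
  rw [pd_eq ((hasFDerivAt_coord 0 x).add_const l) j]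
  simp

lemma pd_n0 (j : Fin 4) (x : Fin 4 → ℝ) :
    pd j (fun y : Fin 4 → ℝ => -y 0) x = -(Pi.single j (1:ℝ) : Fin 4 → ℝ) 0 := by
  rw [pd_eq (f := fun y : Fin 4 → ℝ => -y 0) ((hasFDerivAt_coord 0 x).neg) j]
  simp

lemma pd_poly (c2 c1 c0 : ℝ) (j : Fin 4) (x : Fin 4 → ℝ) :
    pd j (fun y : Fin 4 → ℝ => c2 * (y 1 + y 3)^2 + c1 * (y 1 + y 3) + c0) x
    = (2*c2*(x 1 + x 3) + c1) *
        ((Pi.single j (1:ℝ) : Fin 4 → ℝ) 1 + (Pi.single j (1:ℝ) : Fin 4 → ℝ) 3) := by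
  have hs : HasFDerivAt (fun y : Fin 4 → ℝ => y 1 + y 3)
      ((ContinuousLinearMap.proj 1 : (Fin 4 → ℝ) →L[ℝ] ℝ) + ContinuousLinearMap.proj 3) x :=
    (hasFDerivAt_coord 1 x).add (hasFDerivAt_coord 3 x)
  have e : (fun y : Fin 4 → ℝ => c2 * (y 1 + y 3)^2 + c1 * (y 1 + y 3) + c0)
      = (fun y : Fin 4 → ℝ => c2 * ((y 1 + y 3) * (y 1 + y 3)) + c1 * (y 1 + y 3) + c0) := by
    funext y; ring
  rw [e, pd_eq (f := fun y : Fin 4 → ℝ => c2 * ((y 1 + y 3) * (y 1 + y 3)) + c1 * (y 1 + y 3) + c0) ((((hs.mul hs).const_mul c2).add (hs.const_mul c1)).add_const c0) j]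
  simp [ContinuousLinearMap.add_apply, ContinuousLinearMap.proj_apply, smul_eq_mul]
  ring

lemma const_dir {f : (Fin 4 → ℝ) → ℝ} (hf : Differentiable ℝ f) (v : Fin 4 → ℝ)
    (h : ∀ x, fderiv ℝ f x v = 0) (x : Fin 4 → ℝ) (t : ℝ) : f (x + t • v) = f x := by
  have key : ∀ s : ℝ, HasDerivAt (fun s : ℝ => f (x + s • v)) 0 s := by
    intro s
    have h1 : HasDerivAt (fun s : ℝ => x + s • v) v s := by
      simpa using ((hasDerivAt_id s).smul_const v).const_add x
    have := (hf (x + s • v)).hasFDerivAt.comp_hasDerivAt s h1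
    rw [h] at this; exact this
  have hd : Differentiable ℝ (fun s : ℝ => f (x + s • v)) := fun s => (key s).differentiableAt
  have := is_const_of_deriv_eq_zero hd (fun s => (key s).deriv) t 0
  simpa using this

lemma eq_of_deriv_eq {f g d : ℝ → ℝ} (hf : ∀ t, HasDerivAt f (d t) t)
    (hg : ∀ t, HasDerivAt g (d t) t) (h0 : f 0 = g 0) : ∀ t, f t = g t := by
  intro t
  have key : ∀ s, HasDerivAt (fun s => f s - g s) 0 s := by
    intro s; exact (by simpa using (hf s).sub (hg s) : HasDerivAt (f - g) 0 s)
  have hd : Differentiable ℝ (fun s => f s - g s) := fun s => (key s).differentiableAt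
  have h2 := is_const_of_deriv_eq_zero hd (fun s => (key s).deriv) t 0
  have h3 : f t - g t = 0 := by rw [h2]; simp [h0]
  linarith

/-- Class P_{4,9} for λ ≠ 0: parabolic helices with translations along an
isotropic hyperplane. -/
theorem class_P49_lambda_ne_zero (l : ℝ) (hl : l ≠ 0)
    (A : (Fin 4 → ℝ) → Fin 4 → ℝ) (hA : ContDiff ℝ 1 A) :
    (PInvariant e1 A ∧ PInvariant e3 A ∧
      PInvariant (fun _ => ![0, 1, 0, -1]) A ∧
      PInvariant (fun x => ![-x 1 - x 3, x 0 + l, 0, -x 0]) A) ↔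
      ∃ C1 C2 C3 C4 : ℝ,
        ∀ x, A x 0 = C2 / l * (x 1 + x 3) + C3 ∧
          A x 1 = C2 / (2 * l ^ 2) * (x 1 + x 3) ^ 2 + C3 / l * (x 1 + x 3) + C4 ∧
          A x 2 = C1 ∧
          A x 3 = A x 1 + C2 := by
  constructor
  · rintro ⟨H1, H3, H24, H4⟩
    have hdiff : ∀ i : Fin 4, Differentiable ℝ (fun y => A y i) := by
      intro i
      exact (ContinuousLinearMap.proj i : (Fin 4 → ℝ) →L[ℝ] ℝ).differentiable.comp
        (hA.differentiable one_ne_zero)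
    -- pd 0 vanishes
    have h10 : ∀ x i, pd 0 (fun y => A y i) x = 0 := by
      intro x i
      have h := H1 x i
      simp [lieCov, e1, Fin.sum_univ_four, pd_const] at h
      exact h
    -- pd 2 vanishes
    have h32 : ∀ x i, pd 2 (fun y => A y i) x = 0 := by
      intro x i
      have h := H3 x i
      simp [lieCov, e3, Fin.sum_univ_four, pd_const] at h
      exact h
    -- pd 1 = pd 3
    have h13 : ∀ x i, pd 1 (fun y => A y i) x = pd 3 (fun y => A y i) x := by
      intro x i
      have h := H24 x i
      simp [lieCov, Fin.sum_univ_four, pd_const] at h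
      linarith
    -- the four ODE identities
    have E0 : ∀ x : Fin 4 → ℝ, l * pd 1 (fun y => A y 0) x = A x 3 - A x 1 := by
      intro x
      have h := H4 x 0
      simp [lieCov, Fin.sum_univ_four, pd_const, pd_m13, pd_p0, pd_n0,
        Pi.single_apply, h10, h32] at h
      rw [h13 x 0] at h ⊢
      linear_combination h
    have E1 : ∀ x : Fin 4 → ℝ, l * pd 1 (fun y => A y 1) x = A x 0 := by
      intro x
      have h := H4 x 1
      simp [lieCov, Fin.sum_univ_four, pd_const, pd_m13, pd_p0, pd_n0,
        Pi.single_apply, h10, h32] at h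
      rw [h13 x 1] at h ⊢
      linear_combination h
    have E2 : ∀ x : Fin 4 → ℝ, pd 1 (fun y => A y 2) x = 0 := by
      intro x
      have h := H4 x 2
      simp [lieCov, Fin.sum_univ_four, pd_const, pd_m13, pd_p0, pd_n0,
        Pi.single_apply, h10, h32] at h
      rw [h13 x 2] at h
      have h' : l * pd 3 (fun y => A y 2) x = 0 := by linarith
      rw [h13 x 2]
      exact (mul_eq_zero.mp h').resolve_left hl
    have E3 : ∀ x : Fin 4 → ℝ, l * pd 1 (fun y => A y 3) x = A x 0 := by
      intro x
      have h := H4 x 3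
      simp [lieCov, Fin.sum_univ_four, pd_const, pd_m13, pd_p0, pd_n0,
        Pi.single_apply, h10, h32] at h
      rw [h13 x 3] at h ⊢
      linear_combination h
    -- reduction to a function of s
    set v1 : Fin 4 → ℝ := Pi.single 1 1 with hv1
    set f : Fin 4 → ℝ → ℝ := fun i s => A (s • v1) i with hf
    have htrans : ∀ (x : Fin 4 → ℝ) (i : Fin 4), A x i = f i (x 1 + x 3) := by
      intro x i
      have hw : ∀ y : Fin 4 → ℝ,
          fderiv ℝ (fun y => A y i) y ((Pi.single 3 1 : Fin 4 → ℝ) - Pi.single 1 1) = 0 := by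
        intro y
        rw [(fderiv ℝ (fun y => A y i) y).map_sub]
        have e3' : fderiv ℝ (fun y => A y i) y (Pi.single 3 1) = pd 3 (fun y => A y i) y := rfl
        have e1' : fderiv ℝ (fun y => A y i) y (Pi.single 1 1) = pd 1 (fun y => A y i) y := rfl
        rw [e3', e1', ← h13 y i, sub_self]
      have hx : x = (((x 1 + x 3) • v1 + x 3 • ((Pi.single 3 1 : Fin 4 → ℝ) - Pi.single 1 1))
          + x 2 • (Pi.single 2 1 : Fin 4 → ℝ)) + x 0 • (Pi.single 0 1 : Fin 4 → ℝ) := by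
        funext j
        fin_cases j <;> simp [hv1, Pi.single_apply] <;> ring
      calc A x i = A ((((x 1 + x 3) • v1 + x 3 • ((Pi.single 3 1 : Fin 4 → ℝ) - Pi.single 1 1))
          + x 2 • (Pi.single 2 1 : Fin 4 → ℝ)) + x 0 • (Pi.single 0 1 : Fin 4 → ℝ)) i := by
            rw [← hx]
        _ = A (((x 1 + x 3) • v1 + x 3 • ((Pi.single 3 1 : Fin 4 → ℝ) - Pi.single 1 1))
          + x 2 • (Pi.single 2 1 : Fin 4 → ℝ)) i :=
            const_dir (hdiff i) _ (fun y => h10 y i) _ (x 0)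
        _ = A ((x 1 + x 3) • v1 + x 3 • ((Pi.single 3 1 : Fin 4 → ℝ) - Pi.single 1 1)) i :=
            const_dir (hdiff i) _ (fun y => h32 y i) _ (x 2)
        _ = A ((x 1 + x 3) • v1) i := const_dir (hdiff i) _ hw _ (x 3)
        _ = f i (x 1 + x 3) := rfl
    -- derivatives of f i
    have hderiv : ∀ (i : Fin 4) (s : ℝ),
        HasDerivAt (f i) (pd 1 (fun y => A y i) (s • v1)) s := by
      intro i s
      have hc : HasDerivAt (fun t : ℝ => t • v1) v1 s := by
        simpa using (hasDerivAt_id s).smul_const v1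
      have hcomp := ((hdiff i) (s • v1)).hasFDerivAt.comp_hasDerivAt s hc
      have ev : fderiv ℝ (fun y => A y i) (s • v1) v1
          = pd 1 (fun y => A y i) (s • v1) := rfl
      rw [ev] at hcomp
      exact hcomp
    set C1 : ℝ := f 2 0 with hC1
    set C2 : ℝ := f 3 0 - f 1 0 with hC2
    set C3 : ℝ := f 0 0 with hC3
    set C4 : ℝ := f 1 0 with hC4
    -- f 2 constant
    have hf2 : ∀ s, f 2 s = C1 := by
      refine eq_of_deriv_eq (d := fun _ => 0) (fun s => ?_) (fun _ => hasDerivAt_const _ _) rfl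
      have hder := hderiv 2 s
      rwa [E2 (s • v1)] at hder
    -- f 3 - f 1 constant
    have hf31 : ∀ s, f 3 s - f 1 s = C2 := by
      refine eq_of_deriv_eq (d := fun _ => 0) (fun s => ?_) (fun _ => hasDerivAt_const _ _) rfl
      have h3' := hderiv 3 s
      have h1' := hderiv 1 s
      have e3' : pd 1 (fun y => A y 3) (s • v1) = A (s • v1) 0 / l := by
        rw [eq_div_iff hl]; linear_combination E3 (s • v1)
      have e1' : pd 1 (fun y => A y 1) (s • v1) = A (s • v1) 0 / l := by
        rw [eq_div_iff hl]; linear_combination E1 (s • v1)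
      rw [e3'] at h3'; rw [e1'] at h1'
      exact (by simpa using h3'.sub h1' : HasDerivAt (f 3 - f 1) 0 s)
    -- f 0
    have hf0 : ∀ s, f 0 s = C2 / l * s + C3 := by
      refine eq_of_deriv_eq (d := fun _ => C2 / l) (fun s => ?_) (fun s => ?_) (by simp [hC3])
      · have h0' := hderiv 0 s
        have e0 : pd 1 (fun y => A y 0) (s • v1) = C2 / l := by
          have hE := E0 (s • v1)
          have h31 := hf31 s
          have hA3 : A (s • v1) 3 = f 3 s := rfl
          have hA1 : A (s • v1) 1 = f 1 s := rfl
          rw [hA3, hA1] at hE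
          rw [eq_div_iff hl]
          linear_combination hE + hf31 s
        rwa [e0] at h0'
      · simpa using ((hasDerivAt_id s).const_mul (C2 / l)).add_const C3
    -- f 1
    have hf1 : ∀ s, f 1 s = C2 / (2 * l ^ 2) * s ^ 2 + C3 / l * s + C4 := by
      refine eq_of_deriv_eq (d := fun s => (C2 / l * s + C3) / l) (fun s => ?_) (fun s => ?_)
        (by simp [hC4])
      · have h1' := hderiv 1 s
        have e1' : pd 1 (fun y => A y 1) (s • v1) = (C2 / l * s + C3) / l := by
          have hE := E1 (s • v1)
          have hA0 : A (s • v1) 0 = f 0 s := rfl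
          rw [hA0, hf0 s] at hE
          rw [eq_div_iff hl]
          linear_combination hE
        rwa [e1'] at h1'
      · have hq : HasDerivAt (fun s : ℝ => C2 / (2 * l ^ 2) * s ^ 2 + C3 / l * s + C4)
            (C2 / (2 * l ^ 2) * (2 * s) + C3 / l) s := by
          have hsq : HasDerivAt (fun s : ℝ => s ^ 2) (2 * s) s := by
            simpa using hasDerivAt_pow 2 s
          simpa using ((hsq.const_mul (C2 / (2 * l ^ 2))).add
            ((hasDerivAt_id s).const_mul (C3 / l))).add_const C4
        have heq : C2 / (2 * l ^ 2) * (2 * s) + C3 / l = (C2 / l * s + C3) / l := by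
          field_simp
        rwa [heq] at hq
    refine ⟨C1, C2, C3, C4, fun x => ⟨?_, ?_, ?_, ?_⟩⟩
    · rw [htrans x 0, hf0]
    · rw [htrans x 1, hf1]
    · rw [htrans x 2, hf2]
    · rw [htrans x 3, htrans x 1]
      have := hf31 (x 1 + x 3)
      linarith
  · rintro ⟨C1, C2, C3, C4, h⟩
    have pA0 : ∀ (j : Fin 4) (x : Fin 4 → ℝ), pd j (fun y => A y 0) x
        = (C2 / l) * ((Pi.single j (1:ℝ) : Fin 4 → ℝ) 1 + (Pi.single j (1:ℝ) : Fin 4 → ℝ) 3) := by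
      intro j x
      have e : (fun y => A y 0)
          = (fun y : Fin 4 → ℝ => 0 * (y 1 + y 3)^2 + C2 / l * (y 1 + y 3) + C3) := by
        funext y; rw [(h y).1]; ring
      rw [e, pd_poly]; ring
    have pA1 : ∀ (j : Fin 4) (x : Fin 4 → ℝ), pd j (fun y => A y 1) x
        = ((C2 / l * (x 1 + x 3) + C3) / l) *
          ((Pi.single j (1:ℝ) : Fin 4 → ℝ) 1 + (Pi.single j (1:ℝ) : Fin 4 → ℝ) 3) := by
      intro j x
      have e : (fun y => A y 1)
          = (fun y : Fin 4 → ℝ => C2 / (2 * l ^ 2) * (y 1 + y 3)^2 + C3 / l * (y 1 + y 3) + C4) := by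
        funext y; rw [(h y).2.1]
      rw [e, pd_poly]
      have heq : 2 * (C2 / (2 * l ^ 2)) * (x 1 + x 3) + C3 / l
          = (C2 / l * (x 1 + x 3) + C3) / l := by
        field_simp
      rw [heq]
    have pA2 : ∀ (j : Fin 4) (x : Fin 4 → ℝ), pd j (fun y => A y 2) x = 0 := by
      intro j x
      have e : (fun y => A y 2) = (fun _ : Fin 4 → ℝ => C1) := by
        funext y; exact (h y).2.2.1
      rw [e, pd_const]
    have pA3 : ∀ (j : Fin 4) (x : Fin 4 → ℝ), pd j (fun y => A y 3) x
        = ((C2 / l * (x 1 + x 3) + C3) / l) *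
          ((Pi.single j (1:ℝ) : Fin 4 → ℝ) 1 + (Pi.single j (1:ℝ) : Fin 4 → ℝ) 3) := by
      intro j x
      have e : (fun y => A y 3)
          = (fun y : Fin 4 → ℝ =>
              C2 / (2 * l ^ 2) * (y 1 + y 3)^2 + C3 / l * (y 1 + y 3) + (C4 + C2)) := by
        funext y
        rw [(h y).2.2.2, (h y).2.1]; ring
      rw [e, pd_poly]
      have heq : 2 * (C2 / (2 * l ^ 2)) * (x 1 + x 3) + C3 / l
          = (C2 / l * (x 1 + x 3) + C3) / l := by
        field_simp
      rw [heq]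
    refine ⟨?_, ?_, ?_, ?_⟩ <;> intro x i <;> fin_cases i <;>
      simp [lieCov, e1, e3, Fin.sum_univ_four, pd_const, pd_m13, pd_p0, pd_n0,
        pA0, pA1, pA2, pA3, Pi.single_apply, (h x).1, (h x).2.1, (h x).2.2.1, (h x).2.2.2] <;>
      field_simp <;> ring
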